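/- arXiv:1503.08233 — 2 statements merged into one kernel-verified Lean document; each statement's English description precedes it below -/
import Mathlib

section
/- Let v₀ > 0, let u : ℝ² → ℝ² be a twice continuously differentiable divergence-free vector field, let (r*, θ*) be an equilibrium of the front-element dynamics, let μ ≠ 0 satisfy Du(r*) ĝ(θ*) = μ ĝ(θ*), and set μ' := (2μ² − v₀ Σ_{i,j,k} n̂ᵢ(θ*) ĝⱼ(θ*) ĝₖ(θ*) ∂ⱼ∂ₖuᵢ(r*))/μ. Let J be the Jacobian matrix at (r*, θ*) of the field F(r, θ) = (u(r) + v₀ n̂(θ), −n̂(θ)·(Du(r) ĝ(θ))). Assume μ' ≠ 0. Then: if μ > 0 and μ' > 0, exactly one (complex) eigenvalue of J has positive real part and two have negative real part (type SSU); if μ > 0 and μ' < 0, all three eigenvalues have negative real part (type SSS); if μ < 0 and μ' > 0, all three eigenvalues have positive real part (type UUU); if μ < 0 and μ' < 0, exactly one eigenvalue has negative real part and two have positive real part (type SUU). -/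
noncomputable section

open Real Polynomial

/-- Points in the plane, with the Euclidean norm. -/
abbrev Pt : Type := EuclideanSpace ℝ (Fin 2)

/-- Build a point of the plane from two coordinates. -/
def vec2 (a b : ℝ) : Pt := (WithLp.equiv 2 (Fin 2 → ℝ)).symm ![a, b]

/-- Front tangent direction ĝ(θ) = (cos θ, sin θ). -/
def ghat (θ : ℝ) : Pt := vec2 (Real.cos θ) (Real.sin θ)

/-- Front normal (burning) direction n̂(θ) = (sin θ, −cos θ). -/
def nhat (θ : ℝ) : Pt := vec2 (Real.sin θ) (-(Real.cos θ))

/-- Euclidean dot product on the plane. -/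
def dot (v w : Pt) : ℝ := v 0 * w 0 + v 1 * w 1

/-- The Jacobian matrix Du(r) of a planar vector field. -/
def jacOf (u : Pt → Pt) (r : Pt) : Matrix (Fin 2) (Fin 2) ℝ :=
  fun i j => fderiv ℝ u r (EuclideanSpace.single j 1) i

/-- Action of a 2×2 matrix on a point of the plane. -/
def mulVec2 (M : Matrix (Fin 2) (Fin 2) ℝ) (v : Pt) : Pt :=
  vec2 (M 0 0 * v 0 + M 0 1 * v 1) (M 1 0 * v 0 + M 1 1 * v 1)

/-- The three-dimensional front-element vector field
    F(r, θ) = (u(r) + v₀ n̂(θ), −n̂(θ)·(Du(r) ĝ(θ))). -/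
def frontField (v₀ : ℝ) (u : Pt → Pt) (q : Pt × ℝ) : Pt × ℝ :=
  (u q.1 + v₀ • nhat q.2, -(dot (nhat q.2) (mulVec2 (jacOf u q.1) (ghat q.2))))

/-- The standard basis of ℝ² × ℝ ≃ ℝ³. -/
def basis3 : Fin 3 → Pt × ℝ :=
  ![(EuclideanSpace.single 0 1, 0), (EuclideanSpace.single 1 1, 0), ((0 : Pt), 1)]

/-- Components of a vector in ℝ² × ℝ ≃ ℝ³. -/
def comp3 (p : Pt × ℝ) : Fin 3 → ℝ := ![p.1 0, p.1 1, p.2]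

/-- The 3×3 Jacobian matrix of the front-element field at a point of ℝ² × ℝ. -/
def jac3 (v₀ : ℝ) (u : Pt → Pt) (q : Pt × ℝ) : Matrix (Fin 3) (Fin 3) ℝ :=
  fun i j => comp3 (fderiv ℝ (frontField v₀ u) q (basis3 j)) i

/-- Second partial derivative ∂ⱼ∂ₖuᵢ(r). -/
def d2 (u : Pt → Pt) (r : Pt) (i j k : Fin 2) : ℝ :=
  fderiv ℝ (fun x => fderiv ℝ u x (EuclideanSpace.single k 1) i) r (EuclideanSpace.single j 1)

/-- Divergence-free: ∂₁u₁ + ∂₂u₂ = 0 everywhere. -/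
def divFree (u : Pt → Pt) : Prop := ∀ r : Pt, jacOf u r 0 0 + jacOf u r 1 1 = 0

/-- Rotation of a planar vector by +π/2. -/
def perp (v : Pt) : Pt := vec2 (-(v 1)) (v 0)

/-- The velocity field generated by a stream function: u = (∂Ψ/∂y, −∂Ψ/∂x). -/
def uOf (Ψ : Pt → ℝ) (x : Pt) : Pt :=
  vec2 (fderiv ℝ Ψ x (EuclideanSpace.single 1 1)) (-(fderiv ℝ Ψ x (EuclideanSpace.single 0 1)))

/-- Polar angle of a point of the plane. -/
def angOf (x : Pt) : ℝ := Complex.arg ⟨x 0, x 1⟩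

/-!
From `Du(r*) ĝ = μ ĝ` and `tr Du(r*) = 0` we get `n̂ · Du(r*) n̂ = −μ`, while the θ-column of the
Jacobian is `v₀ ĝ`. Hence in the frame `(ĝ, n̂, ∂θ)` the `n̂`-row of the Jacobian is `(0, −μ, 0)`:
`−μ` is an eigenvalue, and the other two are the roots of `λ² + μλ − μμ'`. Their sum `−μ` and
product `−μμ'` fix the signs of their real parts: for `μμ' > 0` they are real of opposite signs,
for `μμ' < 0` both real parts have the sign of `−μ`.
-/

@[simp] lemma vec2_apply_zero (a b : ℝ) : vec2 a b 0 = a := rfl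

@[simp] lemma vec2_apply_one (a b : ℝ) : vec2 a b 1 = b := rfl

lemma hasDerivAt_nhat (θ : ℝ) : HasDerivAt nhat (ghat θ) θ := by
  have h : HasDerivAt (fun θ => ![Real.sin θ, -Real.cos θ]) ![Real.cos θ, Real.sin θ] θ := by
    refine hasDerivAt_pi.2 fun i => ?_
    fin_cases i
    · simpa using Real.hasDerivAt_sin θ
    · simpa using (Real.hasDerivAt_cos θ).fun_neg
  exact (PiLp.continuousLinearEquiv 2 ℝ (fun _ : Fin 2 => ℝ)).symm.hasFDerivAt.comp_hasDerivAt θ h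

lemma differentiableAt_jacOf_apply {u : Pt → Pt} (hu : ContDiff ℝ 2 u) (r : Pt) (i j : Fin 2) :
    DifferentiableAt ℝ (fun x => jacOf u x i j) r := by
  have hDu : Differentiable ℝ (fderiv ℝ u) :=
    (hu.fderiv_right (m := 1) (by norm_num)).differentiable (by norm_num)
  exact (PiLp.proj 2 (fun _ : Fin 2 => ℝ) i).differentiableAt.comp r
    ((hDu r).clm_apply (differentiableAt_const _))

def frontJacobian (v₀ θ : ℝ) (J : Matrix (Fin 2) (Fin 2) ℝ) (w : Fin 2 → ℝ) :
    Matrix (Fin 3) (Fin 3) ℝ :=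
  Matrix.of ![![J 0 0, J 0 1, v₀ * cos θ], ![J 1 0, J 1 1, v₀ * sin θ],
    ![w 0, w 1, dot (nhat θ) (mulVec2 J (nhat θ)) - dot (ghat θ) (mulVec2 J (ghat θ))]]

lemma jac3_eq (v₀ : ℝ) {u : Pt → Pt} (hu : ContDiff ℝ 2 u) (r : Pt) (θ : ℝ) :
    jac3 v₀ u (r, θ) = frontJacobian v₀ θ (jacOf u r)
      (fun k => -dot (nhat θ) (mulVec2 (Matrix.of fun i j => d2 u r i k j) (ghat θ))) := by
  set q : Pt × ℝ := (r, θ)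
  have hfst := hasFDerivAt_fst (𝕜 := ℝ) (p := q)
  have hsnd := hasFDerivAt_snd (𝕜 := ℝ) (p := q)
  have hJ (i j : Fin 2) := ((differentiableAt_jacOf_apply hu r i j).hasFDerivAt.comp q hfst :)
  have hrdot := (((hu.differentiable (by norm_num) r).hasFDerivAt.comp q hfst).add
      (((hasDerivAt_nhat θ).hasFDerivAt.comp q hsnd).const_smul v₀) :)
  -- `θ̇ = -(n̂ · Du ĝ)` written out in coordinates; it agrees with `frontField` definitionally
  have hθdot := ((hsnd.sin.fun_mul (((hJ 0 0).fun_mul hsnd.cos).fun_add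
      ((hJ 0 1).fun_mul hsnd.sin))).fun_add (hsnd.cos.fun_neg.fun_mul
      (((hJ 1 0).fun_mul hsnd.cos).fun_add ((hJ 1 1).fun_mul hsnd.sin)))).fun_neg
  have hF : HasFDerivAt (frontField v₀ u) _ q := hrdot.prodMk hθdot
  ext i j
  rw [jac3, hF.fderiv]
  fin_cases i <;> fin_cases j <;>
    simp only [q, comp3, basis3, frontJacobian, jacOf, d2, dot, mulVec2, ghat, nhat, Fin.isValue,
      Function.comp_apply, Matrix.cons_val, Matrix.cons_val_zero, Matrix.cons_val_one,
      Fin.zero_eta, Fin.mk_one, Fin.reduceFinMk, Matrix.of_apply, Matrix.cons_val',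
      Matrix.cons_val_fin_one, ContinuousLinearMap.prod_apply, add_apply,
      ContinuousLinearMap.comp_apply, ContinuousLinearMap.coe_fst', ContinuousLinearMap.coe_snd',
      smul_apply, neg_apply, ContinuousLinearMap.toSpanSingleton_apply, map_zero, PiLp.add_apply,
      PiLp.smul_apply, vec2_apply_zero, vec2_apply_one, smul_eq_mul, one_smul, WithLp.ofLp_zero,
      Pi.zero_apply, mul_zero, zero_add, add_zero] <;>
    ring

lemma charpoly_frontJacobian {J : Matrix (Fin 2) (Fin 2) ℝ} {v₀ θ μ : ℝ} (w : Fin 2 → ℝ)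
    (htr : J 0 0 + J 1 1 = 0) (hJ : mulVec2 J (ghat θ) = μ • ghat θ) :
    (frontJacobian v₀ θ J w).charpoly =
      (X + C μ) * (X ^ 2 + C μ * X + C (-(2 * μ ^ 2 + v₀ * (cos θ * w 0 + sin θ * w 1)))) := by
  have h₀ : J 0 0 * cos θ + J 0 1 * sin θ = μ * cos θ := by
    simpa [mulVec2, ghat] using congrArg (· 0) hJ
  have h₁ : J 1 0 * cos θ + J 1 1 * sin θ = μ * sin θ := by
    simpa [mulVec2, ghat] using congrArg (· 1) hJ
  have hpyth := cos_sq_add_sin_sq θ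
  have h₁₁ : J 1 1 = -J 0 0 := by linarith
  rw [h₁₁] at h₁
  -- the other eigenvalue of the traceless `J` is `-μ`, so `det J = -μ²`
  have hdet : J 0 0 ^ 2 + J 0 1 * J 1 0 = μ ^ 2 := by
    linear_combination (J 0 0 * cos θ + J 1 0 * sin θ + μ * cos θ) * h₀
      + (J 0 1 * cos θ - J 0 0 * sin θ + μ * sin θ) * h₁ - (J 0 0 ^ 2 + J 0 1 * J 1 0 - μ ^ 2) * hpyth
  have hdiag : dot (nhat θ) (mulVec2 J (nhat θ)) - dot (ghat θ) (mulVec2 J (ghat θ)) = -(2 * μ) := by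
    simp only [dot, mulVec2, nhat, ghat, vec2_apply_zero, vec2_apply_one, h₁₁]
    linear_combination (-2 * cos θ) * h₀ + (-2 * sin θ) * h₁ - 2 * μ * hpyth
  have hC₀ := congrArg C h₀
  have hC₁ := congrArg C h₁
  have hCdet := congrArg C hdet
  simp only [map_add, map_mul, map_neg, map_pow] at hC₀ hC₁ hCdet
  rw [Matrix.charpoly, Matrix.det_fin_three]
  simp only [frontJacobian, hdiag, h₁₁, Matrix.charmatrix_apply, Matrix.diagonal_apply,
    Matrix.of_apply, Matrix.cons_val', Matrix.cons_val_zero, Matrix.cons_val_one,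
    Matrix.head_cons, Matrix.empty_val', Matrix.cons_val_fin_one, Matrix.head_fin_const,
    Matrix.cons_val_two, Matrix.tail_cons]
  norm_num [Fin.ext_iff, map_ofNat]
  linear_combination (-X - 2 * C μ) * hCdet - C v₀ * C (w 0) * hC₀ - C v₀ * C (w 1) * hC₁

lemma exists_roots_map_quadratic (b c : ℝ) :
    ∃ z₁ z₂ : ℂ, ((X ^ 2 + C b * X + C c).map (algebraMap ℝ ℂ)).roots = {z₁, z₂} ∧
      z₁ + z₂ = -b ∧ z₁ * z₂ = c := by
  obtain ⟨s, hs⟩ := IsAlgClosed.exists_eq_mul_self ((b : ℂ) ^ 2 - 4 * c)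
  set z₁ := (-b + s) / 2
  set z₂ := (-b - s) / 2
  have hsum : z₁ + z₂ = -b := by ring
  have hprod : z₁ * z₂ = c := by linear_combination (1 / 4 : ℂ) * hs
  have hfac : (X ^ 2 + C b * X + C c).map (algebraMap ℝ ℂ) = (X - C z₁) * (X - C z₂) := by
    have hb : C (b : ℂ) = -(C z₁ + C z₂) := by rw [← map_add, hsum, map_neg, neg_neg]
    have hc : C (c : ℂ) = C z₁ * C z₂ := by rw [← map_mul, hprod]
    simp only [Polynomial.map_add, Polynomial.map_mul, Polynomial.map_pow, Polynomial.map_X,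
      Polynomial.map_C, Complex.coe_algebraMap, hb, hc]
    ring
  refine ⟨z₁, z₂, ?_, hsum, hprod⟩
  rw [hfac, roots_mul (mul_ne_zero (X_sub_C_ne_zero _) (X_sub_C_ne_zero _)), roots_X_sub_C,
    roots_X_sub_C]
  rfl

lemma exists_roots_map_cubic (μ c : ℝ) :
    ∃ z₁ z₂ : ℂ, (((X + C μ) * (X ^ 2 + C μ * X + C c)).map (algebraMap ℝ ℂ)).roots =
      {-(μ : ℂ), z₁, z₂} ∧ z₁ + z₂ = -μ ∧ z₁ * z₂ = c := by
  obtain ⟨z₁, z₂, hroots, hsum, hprod⟩ := exists_roots_map_quadratic μ c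
  refine ⟨z₁, z₂, ?_, hsum, hprod⟩
  have hlin : (X + C μ).map (algebraMap ℝ ℂ) = X + C (μ : ℂ) := by simp
  have hmonic : ((X + C μ) * (X ^ 2 + C μ * X + C c)).Monic := by monicity!
  have hne := (hmonic.map (algebraMap ℝ ℂ)).ne_zero
  rw [Polynomial.map_mul] at hne
  rw [Polynomial.map_mul, roots_mul hne, hroots, hlin, roots_X_add_C]
  rfl

section Vieta

variable {z₁ z₂ : ℂ} {b c : ℝ}

lemma re_im_of_vieta (hsum : z₁ + z₂ = -b) (hprod : z₁ * z₂ = c) :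
    z₁.re + z₂.re = -b ∧ z₁.re * z₂.re + z₁.im ^ 2 = c ∧ z₁.im * (z₂.re - z₁.re) = 0 := by
  have hre_sum : z₁.re + z₂.re = -b := by simpa using congrArg Complex.re hsum
  have him_sum : z₁.im + z₂.im = 0 := by simpa using congrArg Complex.im hsum
  have hre : z₁.re * z₂.re - z₁.im * z₂.im = c := by simpa using congrArg Complex.re hprod
  have him : z₁.re * z₂.im + z₁.im * z₂.re = 0 := by simpa using congrArg Complex.im hprod
  refine ⟨hre_sum, ?_, ?_⟩
  · linear_combination hre + z₁.im * him_sum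
  · linear_combination him - z₁.re * him_sum

lemma re_mul_re_neg_of_vieta (hsum : z₁ + z₂ = -b) (hprod : z₁ * z₂ = c) (hc : c < 0) :
    z₁.re * z₂.re < 0 := by
  obtain ⟨-, hre, -⟩ := re_im_of_vieta hsum hprod
  nlinarith [sq_nonneg z₁.im]

lemma re_neg_of_vieta (hsum : z₁ + z₂ = -b) (hprod : z₁ * z₂ = c) (hc : 0 < c) (hb : 0 < b) :
    z₁.re < 0 ∧ z₂.re < 0 := by
  obtain ⟨hre_sum, hre, him⟩ := re_im_of_vieta hsum hprod
  -- either both roots are real, or they are conjugate with common real part `-b/2`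
  rcases eq_or_ne z₁.im 0 with h | h
  · rw [h] at hre
    constructor <;> nlinarith
  · have := (mul_eq_zero.1 him).resolve_left h
    constructor <;> linarith

lemma re_pos_of_vieta (hsum : z₁ + z₂ = -b) (hprod : z₁ * z₂ = c) (hc : 0 < c) (hb : b < 0) :
    0 < z₁.re ∧ 0 < z₂.re := by
  have := re_neg_of_vieta (z₁ := -z₁) (z₂ := -z₂) (b := -b)
    (by push_cast; linear_combination -hsum) (by linear_combination hprod) hc (by linarith)
  simpa using this

end Vieta

lemma card_filter_triple {α : Type*} (p : α → Prop) [DecidablePred p] (a b c : α) :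
    Multiset.card (({a, b, c} : Multiset α).filter p) =
      (if p a then 1 else 0) + (if p b then 1 else 0) + (if p c then 1 else 0) := by
  simp only [Multiset.insert_eq_cons, ← Multiset.countP_eq_card_filter, Multiset.countP_cons,
    ← Multiset.cons_zero, Multiset.countP_zero]
  ring

lemma card_roots_filter_re (μ μ' : ℝ) :
    let E := (((X + C μ) * (X ^ 2 + C μ * X + C (-(μ * μ')))).map (algebraMap ℝ ℂ)).roots
    ((0 < μ ∧ 0 < μ' →
        Multiset.card (E.filter (fun z => 0 < z.re)) = 1 ∧
        Multiset.card (E.filter (fun z => z.re < 0)) = 2) ∧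
     (0 < μ ∧ μ' < 0 →
        Multiset.card (E.filter (fun z => z.re < 0)) = 3) ∧
     (μ < 0 ∧ 0 < μ' →
        Multiset.card (E.filter (fun z => 0 < z.re)) = 3) ∧
     (μ < 0 ∧ μ' < 0 →
        Multiset.card (E.filter (fun z => z.re < 0)) = 1 ∧
        Multiset.card (E.filter (fun z => 0 < z.re)) = 2)) := by
  obtain ⟨z₁, z₂, hroots, hsum, hprod⟩ := exists_roots_map_cubic μ (-(μ * μ'))
  intro E
  simp only [E, hroots, card_filter_triple]
  refine ⟨fun ⟨hμ, hμ'⟩ => ?_, fun ⟨hμ, hμ'⟩ => ?_, fun ⟨hμ, hμ'⟩ => ?_, fun ⟨hμ, hμ'⟩ => ?_⟩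
  · rcases mul_neg_iff.1 (re_mul_re_neg_of_vieta hsum hprod (by nlinarith)) with h | h <;>
      simp [hμ, hμ.le, h.1, h.2, h.1.not_gt, h.2.not_gt]
  · obtain ⟨h₁, h₂⟩ := re_neg_of_vieta hsum hprod (by nlinarith) hμ
    simp [hμ, h₁, h₂]
  · obtain ⟨h₁, h₂⟩ := re_pos_of_vieta hsum hprod (by nlinarith) hμ
    simp [hμ, h₁, h₂]
  · rcases mul_neg_iff.1 (re_mul_re_neg_of_vieta hsum hprod (by nlinarith)) with h | h <;>
      simp [hμ, hμ.not_gt, h.1, h.2, h.1.not_gt, h.2.not_gt]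

theorem bfp_stability_classification_general
    (v₀ : ℝ) (u : Pt → Pt) (hu : ContDiff ℝ 2 u) (hdiv : divFree u)
    (rs : Pt) (θs : ℝ)
    (μ : ℝ) (hμ0 : μ ≠ 0) (hμ : mulVec2 (jacOf u rs) (ghat θs) = μ • ghat θs)
    (μ' : ℝ)
    (hμ' : μ' = (2 * μ ^ 2 - v₀ * ∑ i : Fin 2, ∑ j : Fin 2, ∑ k : Fin 2,
      nhat θs i * ghat θs j * ghat θs k * d2 u rs i j k) / μ) :
    let E := (((jac3 v₀ u (rs, θs)).charpoly).map (algebraMap ℝ ℂ)).roots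
    ((0 < μ ∧ 0 < μ' →
        Multiset.card (E.filter (fun z => 0 < z.re)) = 1 ∧
        Multiset.card (E.filter (fun z => z.re < 0)) = 2) ∧
     (0 < μ ∧ μ' < 0 →
        Multiset.card (E.filter (fun z => z.re < 0)) = 3) ∧
     (μ < 0 ∧ 0 < μ' →
        Multiset.card (E.filter (fun z => 0 < z.re)) = 3) ∧
     (μ < 0 ∧ μ' < 0 →
        Multiset.card (E.filter (fun z => z.re < 0)) = 1 ∧
        Multiset.card (E.filter (fun z => 0 < z.re)) = 2)) := by
  have hμμ' : 2 * μ ^ 2 - v₀ * (∑ i : Fin 2, ∑ j : Fin 2, ∑ k : Fin 2,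
      nhat θs i * ghat θs j * ghat θs k * d2 u rs i j k) = μ * μ' := by
    rw [hμ', mul_div_cancel₀ _ hμ0]
  have hcp : (jac3 v₀ u (rs, θs)).charpoly =
      (X + C μ) * (X ^ 2 + C μ * X + C (-(μ * μ'))) := by
    rw [jac3_eq v₀ hu, charpoly_frontJacobian _ (hdiv rs) hμ, ← hμμ']
    congr 4
    simp only [dot, mulVec2, nhat, ghat, Matrix.of_apply, vec2_apply_zero, vec2_apply_one,
      Fin.sum_univ_two]
    ring
  rw [hcp]
  exact card_roots_filter_re μ μ'

/-- Stability classification of a burning fixed point by the signs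
of μ and μ': counting (with algebraic multiplicity over ℂ) the eigenvalues of the
Jacobian of the front-element field that have positive/negative real part. -/
theorem bfp_stability_classification
    (v₀ : ℝ) (hv₀ : 0 < v₀) (u : Pt → Pt) (hu : ContDiff ℝ 2 u) (hdiv : divFree u)
    (rs : Pt) (θs : ℝ) (heq : frontField v₀ u (rs, θs) = 0)
    (μ : ℝ) (hμ0 : μ ≠ 0) (hμ : mulVec2 (jacOf u rs) (ghat θs) = μ • ghat θs)
    (μ' : ℝ)
    (hμ' : μ' = (2 * μ ^ 2 - v₀ * ∑ i : Fin 2, ∑ j : Fin 2, ∑ k : Fin 2,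
      nhat θs i * ghat θs j * ghat θs k * d2 u rs i j k) / μ)
    (hμ'0 : μ' ≠ 0) :
    let E := (((jac3 v₀ u (rs, θs)).charpoly).map (algebraMap ℝ ℂ)).roots
    ((0 < μ ∧ 0 < μ' →
        Multiset.card (E.filter (fun z => 0 < z.re)) = 1 ∧
        Multiset.card (E.filter (fun z => z.re < 0)) = 2) ∧
     (0 < μ ∧ μ' < 0 →
        Multiset.card (E.filter (fun z => z.re < 0)) = 3) ∧
     (μ < 0 ∧ 0 < μ' →
        Multiset.card (E.filter (fun z => 0 < z.re)) = 3) ∧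
     (μ < 0 ∧ μ' < 0 →
        Multiset.card (E.filter (fun z => z.re < 0)) = 1 ∧
        Multiset.card (E.filter (fun z => 0 < z.re)) = 2)) :=
  bfp_stability_classification_general v₀ u hu hdiv rs θs μ hμ0 hμ μ' hμ'
end
end

section
/- Length of a cusp-free sliding front: let v₀ > 0, let Ψ : ℝ² → ℝ be continuously differentiable, let u = (∂Ψ/∂y, −∂Ψ/∂x), and let (r, θ) : [t₀, t₁] → ℝ² × ℝ be a differentiable solution of ṙ = u(r) + v₀ n̂(θ) that is sliding (ṙ · n̂(θ) = 0) and satisfies ṙ(t) · ĝ(θ(t)) > 0 for all t ∈ [t₀, t₁]. Then the arc length of the trajectory equals the drop in stream function divided by the burning speed: ∫_{t₀}^{t₁} |ṙ(t)| dt = (Ψ(r(t₀)) − Ψ(r(t₁)))/v₀. -/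
noncomputable section

open Real Polynomial

/-!
Since ĝ(θ), n̂(θ) is an orthonormal frame, a sliding velocity ṙ is parallel to ĝ(θ), and
ṙ · ĝ(θ) > 0 makes |ṙ| = ṙ · ĝ(θ). Along the trajectory, dΨ(r)/dt = ∇Ψ · ṙ; the fluid part
contributes ∇Ψ · u = 0, and the burning part gives v₀ ∇Ψ · n̂(θ) = −v₀ u · ĝ(θ) = −v₀ ṙ · ĝ(θ).
Hence −Ψ(r)/v₀ is an antiderivative of |ṙ|, and the fundamental theorem of calculus applies;
its derivative being nonnegative, it is automatically integrable.
-/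

theorem intervalIntegral.integral_eq_sub_of_hasDerivAt_of_nonneg {g g' : ℝ → ℝ} {a b : ℝ}
    (hab : a ≤ b) (hderiv : ∀ t ∈ Set.Icc a b, HasDerivAt g (g' t) t)
    (hnonneg : ∀ t ∈ Set.Icc a b, 0 ≤ g' t) :
    ∫ t in a..b, g' t = g b - g a := by
  rw [← Set.uIcc_of_le hab] at hderiv hnonneg
  exact intervalIntegral.integral_eq_sub_of_hasDerivAt hderiv
    (intervalIntegral.intervalIntegrable_deriv_of_nonneg (HasDerivAt.continuousOn hderiv)
      (fun t ht => hderiv t (Set.Ioo_subset_Icc_self ht))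
      (fun t ht => hnonneg t (Set.Ioo_subset_Icc_self ht)))

theorem norm_sq_eq_dot_ghat_sq_add_dot_nhat_sq (w : Pt) (θ : ℝ) :
    ‖w‖ ^ 2 = dot w (ghat θ) ^ 2 + dot w (nhat θ) ^ 2 := by
  rw [EuclideanSpace.norm_sq_eq, Fin.sum_univ_two]
  simp only [dot, ghat, nhat, vec2, Real.norm_eq_abs, sq_abs, WithLp.equiv_symm_apply,
    Matrix.cons_val_zero, Matrix.cons_val_one, Matrix.cons_val_fin_one, mul_neg]
  linear_combination -(w 0 ^ 2 + w 1 ^ 2) * Real.sin_sq_add_cos_sq θ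

theorem norm_eq_dot_ghat_of_dot_nhat_eq_zero {w : Pt} {θ : ℝ} (hn : dot w (nhat θ) = 0)
    (hg : 0 ≤ dot w (ghat θ)) : ‖w‖ = dot w (ghat θ) := by
  have h := norm_sq_eq_dot_ghat_sq_add_dot_nhat_sq w θ
  rw [hn] at h
  nlinarith [norm_nonneg w]

theorem ContinuousLinearMap.apply_pt_eq (L : Pt →L[ℝ] ℝ) (v : Pt) :
    L v = v 0 * L (EuclideanSpace.single 0 1) + v 1 * L (EuclideanSpace.single 1 1) := by
  have hv : v = v 0 • EuclideanSpace.single 0 1 + v 1 • EuclideanSpace.single 1 1 := by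
    ext i; fin_cases i <;> simp
  conv_lhs => rw [hv]
  simp

theorem fderiv_apply_uOf_add_smul_nhat (Ψ : Pt → ℝ) (x : Pt) (v₀ θ : ℝ) :
    fderiv ℝ Ψ x (uOf Ψ x + v₀ • nhat θ) = -(v₀ * dot (uOf Ψ x + v₀ • nhat θ) (ghat θ)) := by
  rw [ContinuousLinearMap.apply_pt_eq]
  simp only [dot, uOf, nhat, ghat, vec2, WithLp.equiv_symm_apply, PiLp.add_apply,
    PiLp.smul_apply, smul_eq_mul, Matrix.cons_val_zero, Matrix.cons_val_one,
    Matrix.cons_val_fin_one]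
  ring

/-- Length of a cusp-free sliding front: for a sliding solution
with ṙ·ĝ > 0 on [t₀, t₁], the arc length equals the drop in stream function
divided by the burning speed. -/
theorem sliding_front_length
    (v₀ : ℝ) (hv₀ : 0 < v₀) (Ψ : Pt → ℝ) (hΨ : ContDiff ℝ 1 Ψ)
    (t₀ t₁ : ℝ) (ht : t₀ ≤ t₁) (r : ℝ → Pt) (θ : ℝ → ℝ)
    (hr : ∀ t ∈ Set.Icc t₀ t₁, HasDerivAt r (uOf Ψ (r t) + v₀ • nhat (θ t)) t)
    (hslide : ∀ t ∈ Set.Icc t₀ t₁,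
      dot (uOf Ψ (r t) + v₀ • nhat (θ t)) (nhat (θ t)) = 0)
    (hpos : ∀ t ∈ Set.Icc t₀ t₁,
      0 < dot (uOf Ψ (r t) + v₀ • nhat (θ t)) (ghat (θ t))) :
    ∫ t in t₀..t₁, ‖uOf Ψ (r t) + v₀ • nhat (θ t)‖ =
      (Ψ (r t₀) - Ψ (r t₁)) / v₀ := by
  have hspeed : ∀ t ∈ Set.Icc t₀ t₁, ‖uOf Ψ (r t) + v₀ • nhat (θ t)‖ =
      dot (uOf Ψ (r t) + v₀ • nhat (θ t)) (ghat (θ t)) := fun t hts =>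
    norm_eq_dot_ghat_of_dot_nhat_eq_zero (hslide t hts) (hpos t hts).le
  have hderiv : ∀ t ∈ Set.Icc t₀ t₁,
      HasDerivAt (fun s => -Ψ (r s) / v₀) ‖uOf Ψ (r t) + v₀ • nhat (θ t)‖ t := by
    intro t hts
    have hΨr := (hΨ.differentiable one_ne_zero (r t)).hasFDerivAt.comp_hasDerivAt t (hr t hts)
    refine (hΨr.neg.div_const v₀).congr_deriv ?_
    rw [fderiv_apply_uOf_add_smul_nhat, hspeed t hts]
    field_simp
  rw [intervalIntegral.integral_eq_sub_of_hasDerivAt_of_nonneg ht hderiv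
    (fun t _ => norm_nonneg _)]
  ring
end
end
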